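/- arXiv:0808.3646 — 2 statements merged into one kernel-verified Lean document; each statement's English description precedes it below -/
import Mathlib

section
/- The F-vector space V₁ of finite type invariants of degree ≤ 1 has dimension 2; a basis is given by the constant function 1 and the function assigning to each signed word its number of letters. -/
/-- Letters are indexed by natural numbers; a signed letter carries a sign
(`true` = `+`, `false` = `−`). -/
abbrev Letter : Type := ℕ × Bool

/-- A signed word: every entry occurs exactly twice, and the two occurrences of
any letter carry the same sign. -/
def IsSignedWord (w : List Letter) : Prop :=
  ∀ p ∈ w, w.count p = 2 ∧ ∀ q ∈ w, q.1 = p.1 → q.2 = p.2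

/-- Signed words (concrete representatives; isomorphism is subsumed by cyclic
equivalence below). -/
def SignedWord : Type := {w : List Letter // IsSignedWord w}

/-- The set of letters occurring in a list of signed letters. -/
def lettersL (w : List Letter) : Finset ℕ := (w.map Prod.fst).toFinset

/-- The set of letters of a signed word. -/
def SignedWord.letters (w : SignedWord) : Finset ℕ := lettersL w.1

/-- The number of (distinct) letters of a signed word. -/
def SignedWord.numLetters (w : SignedWord) : ℕ := w.letters.card

theorem isSignedWord_filter (q : ℕ → Bool) {w : List Letter} (hw : IsSignedWord w) :
    IsSignedWord (w.filter fun p => q p.1) := by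
  intro p hp
  rw [List.mem_filter] at hp
  refine ⟨?_, fun r hr => (hw p hp.1).2 r (List.mem_filter.mp hr).1⟩
  rw [List.count_filter (p := fun r : Letter => q r.1) hp.2]
  exact (hw p hp.1).1

/-- Delete both occurrences of every letter of `T` from `w`. -/
def SignedWord.delete (w : SignedWord) (T : Finset ℕ) : SignedWord :=
  ⟨w.1.filter fun p => decide (p.1 ∉ T), isSignedWord_filter (fun a => decide (a ∉ T)) w.2⟩

/-- The induced signed subword of `w` on a set `U` of letters. -/
def SignedWord.restrict (w : SignedWord) (U : Finset ℕ) : SignedWord :=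
  ⟨w.1.filter fun p => decide (p.1 ∈ U), isSignedWord_filter (fun a => decide (a ∈ U)) w.2⟩

/-- Sign-preserving relabeling of letters. -/
def Iso (w w' : List Letter) : Prop :=
  ∃ f : ℕ ≃ ℕ, w' = w.map fun p => (f p.1, p.2)

/-- The basic move `A^ε x A^ε y ↦ x A^(−ε) y A^(−ε)`. -/
def Move (w w' : List Letter) : Prop :=
  ∃ (a : ℕ) (s : Bool) (x y : List Letter),
    w = (a, s) :: (x ++ (a, s) :: y) ∧ w' = x ++ (a, !s) :: (y ++ [(a, !s)])

/-- Cyclic equivalence of signed words: the equivalence relation generated by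
isomorphism together with the basic move. -/
def CyclicEquivL : List Letter → List Letter → Prop :=
  Relation.EqvGen fun w w' => Iso w w' ∨ Move w w'

/-- Cyclic equivalence of signed words. -/
def SignedWord.CyclicEquiv (w w' : SignedWord) : Prop := CyclicEquivL w.1 w'.1

/-- A cyclic equivalence invariant with values in `F`. -/
def WordInvariant (F : Type*) [Field F] (v : SignedWord → F) : Prop :=
  ∀ w w' : SignedWord, w.CyclicEquiv w' → v w = v w'

/-- The prolongation of `v` to the singular signed word `(w, S)` (the letters of
`S` being declared singular), given by inclusion–exclusion. -/
def prolong (F : Type*) [Field F] (v : SignedWord → F) (w : SignedWord) (S : Finset ℕ) : F :=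
  ∑ T ∈ S.powerset, (-1 : F) ^ T.card * v (w.delete T)

/-- `v` is a finite type invariant of degree ≤ `n`: it is a cyclic equivalence
invariant whose prolongation vanishes on every singular signed word with more
than `n` singular letters. -/
def FiniteTypeLe (F : Type*) [Field F] (n : ℕ) (v : SignedWord → F) : Prop :=
  WordInvariant F v ∧
    ∀ (w : SignedWord) (S : Finset ℕ), S ⊆ w.letters → n < S.card →
      prolong F v w S = 0

/-- The empty signed word `φ`. -/
def wordEmpty : SignedWord := ⟨[], by intro p hp; simp at hp⟩

/-- The one-letter positive signed word `AA`. -/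
def wordAA : SignedWord := ⟨[(0, true), (0, true)], by unfold IsSignedWord; decide⟩

/-- The one-letter negative signed word `ĀĀ`. -/
def wordAAneg : SignedWord := ⟨[(0, false), (0, false)], by unfold IsSignedWord; decide⟩

/-- The two-letter signed word `AABB`. -/
def wordAABB : SignedWord := ⟨[(0, true), (0, true), (1, true), (1, true)], by unfold IsSignedWord; decide⟩

/-- The two-letter signed word `AAB̄B̄`. -/
def wordAABnBn : SignedWord := ⟨[(0, true), (0, true), (1, false), (1, false)], by unfold IsSignedWord; decide⟩

/-- The two-letter signed word `AB̄B̄A`. -/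
def wordABnBnA : SignedWord := ⟨[(0, true), (1, false), (1, false), (0, true)], by unfold IsSignedWord; decide⟩

/-- The two-letter signed word `ABAB`. -/
def wordABAB : SignedWord := ⟨[(0, true), (1, true), (0, true), (1, true)], by unfold IsSignedWord; decide⟩

/-- The underlying list of the word `A₁A₁A₂A₂…AₙAₙ` (all letters positive). -/
def wListN (n : ℕ) : List Letter := (List.range n).flatMap fun i => [(i, true), (i, true)]

/-- `Ncount u w`: the number of `k`-element subsets of the letters of `w`
(`k` = number of letters of `u`) whose induced signed subword is cyclically
equivalent to (an isomorphic copy of) `u`. -/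
noncomputable def Ncount (u w : SignedWord) : ℕ := by
  classical
  exact (w.letters.powerset.filter fun U =>
    U.card = u.numLetters ∧ (w.restrict U).CyclicEquiv u).card

theorem prolong_add (F : Type*) [Field F] (v₁ v₂ : SignedWord → F) (w : SignedWord) (S : Finset ℕ) :
    prolong F (v₁ + v₂) w S = prolong F v₁ w S + prolong F v₂ w S := by
  simp [prolong, ← Finset.sum_add_distrib, mul_add]

theorem prolong_smul (F : Type*) [Field F] (c : F) (v : SignedWord → F) (w : SignedWord) (S : Finset ℕ) :
    prolong F (c • v) w S = c * prolong F v w S := by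
  rw [prolong, prolong, Finset.mul_sum]
  exact Finset.sum_congr rfl fun T _ => by simp [mul_left_comm]

/-- The `F`-vector space `Vₙ` of finite type invariants of degree ≤ `n`. -/
def Vn (F : Type*) [Field F] (n : ℕ) : Submodule F (SignedWord → F) where
  carrier := {v | FiniteTypeLe F n v}
  add_mem' := by
    rintro v₁ v₂ ⟨h1, h1'⟩ ⟨h2, h2'⟩
    refine ⟨fun w w' h => by simp [h1 w w' h, h2 w w' h], fun w S hS hc => ?_⟩
    rw [prolong_add, h1' w S hS hc, h2' w S hS hc, add_zero]
  zero_mem' := ⟨fun _ _ _ => rfl, fun w S hS hc => by simp [prolong]⟩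
  smul_mem' := by
    rintro c v ⟨h, h'⟩
    refine ⟨fun w w' hww => by simp [h w w' hww], fun w S hS hc => ?_⟩
    rw [prolong_smul, h' w S hS hc, mul_zero]

/-- Cyclic equivalence as a setoid on signed words. -/
def cycSetoid : Setoid SignedWord :=
  ⟨SignedWord.CyclicEquiv, fun w => Relation.EqvGen.refl w.1,
    fun h => Relation.EqvGen.symm _ _ h, fun h h' => Relation.EqvGen.trans _ _ _ h h'⟩

/-!
Deleting `a` and then `S` is deleting `S ∪ {a}`, so the prolongation satisfies
`ṽ(w, S ∪ {a}) = ṽ(w, S) - ṽ(w ∖ a, S)`; hence `v` has degree `≤ 1` exactly when it is a cyclic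
invariant whose second differences `v w - v (w ∖ a) - v (w ∖ b) + v (w ∖ ab)` vanish. Such a `v`
is then determined, by induction on the number `n` of letters, by its values on `φ` and on the
one-letter words, all of which are cyclically equivalent to `AA`: `v = v φ + n (v AA - v φ)`.
Conversely `1` and `n` have vanishing second differences, and they are independent, as one sees
by evaluating at `φ` and `AA`.
-/

lemma mem_lettersL {w : List Letter} {a : ℕ} : a ∈ lettersL w ↔ ∃ p ∈ w, p.1 = a := by
  simp [lettersL]

lemma letters_delete (w : SignedWord) (T : Finset ℕ) :
    (w.delete T).letters = w.letters \ T := by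
  ext a
  simp only [SignedWord.letters, SignedWord.delete, Finset.mem_sdiff, mem_lettersL,
    List.mem_filter, decide_eq_true_eq]
  constructor
  · rintro ⟨p, ⟨hp, hpT⟩, rfl⟩
    exact ⟨⟨p, hp, rfl⟩, hpT⟩
  · rintro ⟨⟨p, hp, rfl⟩, hT⟩
    exact ⟨p, ⟨hp, hT⟩, rfl⟩

lemma numLetters_delete_add_card (w : SignedWord) {T : Finset ℕ} (hT : T ⊆ w.letters) :
    (w.delete T).numLetters + T.card = w.numLetters := by
  rw [SignedWord.numLetters, letters_delete, Finset.card_sdiff_add_card_eq_card hT]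
  rfl

lemma delete_empty (w : SignedWord) : w.delete ∅ = w :=
  Subtype.ext (by simp [SignedWord.delete])

lemma delete_insert (w : SignedWord) (a : ℕ) (T : Finset ℕ) :
    w.delete (insert a T) = (w.delete {a}).delete T := by
  apply Subtype.ext
  simp only [SignedWord.delete, List.filter_filter]
  exact List.filter_congr fun p _ => by simp [not_or, Bool.and_comm]

lemma card_lettersL_of_iso {w w' : List Letter} (h : Iso w w') :
    (lettersL w').card = (lettersL w).card := by
  obtain ⟨f, rfl⟩ := h
  have : lettersL (w.map fun p => (f p.1, p.2)) = (lettersL w).image f := by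
    ext b
    simp [lettersL]
  rw [this, Finset.card_image_of_injective _ f.injective]

lemma lettersL_of_move {w w' : List Letter} (h : Move w w') : lettersL w' = lettersL w := by
  obtain ⟨a, s, x, y, rfl, rfl⟩ := h
  ext b
  simp only [lettersL, List.map_append, List.map_cons, List.map_nil, List.mem_toFinset,
    List.mem_append, List.mem_cons, List.not_mem_nil]
  tauto

lemma CyclicEquivL.card_lettersL_eq {u u' : List Letter} (h : CyclicEquivL u u') :
    (lettersL u).card = (lettersL u').card := by
  induction h with
  | rel _ _ h =>
    rcases h with h | h
    · exact (card_lettersL_of_iso h).symm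
    · rw [lettersL_of_move h]
  | refl => rfl
  | symm _ _ _ ih => exact ih.symm
  | trans _ _ _ _ _ ih₁ ih₂ => exact ih₁.trans ih₂

lemma SignedWord.CyclicEquiv.numLetters_eq {w w' : SignedWord} (h : w.CyclicEquiv w') :
    w.numLetters = w'.numLetters :=
  CyclicEquivL.card_lettersL_eq h

lemma numLetters_wordEmpty : wordEmpty.numLetters = 0 := rfl

lemma numLetters_wordAA : wordAA.numLetters = 1 := rfl

lemma eq_wordEmpty_of_numLetters_eq_zero {w : SignedWord} (h : w.numLetters = 0) :
    w = wordEmpty := by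
  refine Subtype.ext (List.eq_nil_iff_forall_not_mem.mpr fun p hp => ?_)
  have : p.1 ∈ w.letters := mem_lettersL.mpr ⟨p, hp, rfl⟩
  rw [Finset.card_eq_zero.mp h] at this
  exact Finset.notMem_empty _ this

lemma eq_pair_of_numLetters_eq_one {w : SignedWord} (h : w.numLetters = 1) :
    ∃ a s, w.1 = [(a, s), (a, s)] := by
  obtain ⟨a, ha⟩ := Finset.card_eq_one.mp h
  obtain ⟨p, hp, -⟩ := mem_lettersL.mp (ha ▸ Finset.mem_singleton_self a)
  have hall : ∀ q ∈ w.1, q = p := fun q hq => by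
    have h1 : q.1 = p.1 := by
      have hq : q.1 ∈ w.letters := mem_lettersL.mpr ⟨q, hq, rfl⟩
      have hp : p.1 ∈ w.letters := mem_lettersL.mpr ⟨p, hp, rfl⟩
      rw [ha, Finset.mem_singleton] at hq hp
      rw [hq, hp]
    exact Prod.ext h1 ((w.2 p hp).2 q hq h1)
  have hlen : w.1.length = 2 := by
    rw [← List.count_eq_length.mpr fun q hq => (hall q hq).symm, (w.2 p hp).1]
  exact ⟨p.1, p.2, by rw [List.eq_replicate_of_mem hall, hlen]; rfl⟩

lemma cyclicEquiv_wordAA_of_numLetters_eq_one {w : SignedWord} (h : w.numLetters = 1) :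
    w.CyclicEquiv wordAA := by
  obtain ⟨a, s, hw⟩ := eq_pair_of_numLetters_eq_one h
  have hiso : Iso w.1 [(0, s), (0, s)] := ⟨Equiv.swap a 0, by simp [hw]⟩
  cases s with
  | true => exact Relation.EqvGen.rel _ _ (Or.inl hiso)
  | false =>
    have hmove : Move wordAA.1 [(0, false), (0, false)] := ⟨0, true, [], [], rfl, rfl⟩
    exact Relation.EqvGen.trans _ _ _ (Relation.EqvGen.rel _ _ (Or.inl hiso))
      (Relation.EqvGen.symm _ _ (Relation.EqvGen.rel _ _ (Or.inr hmove)))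

section

variable {F : Type*} [Field F]

lemma prolong_empty (v : SignedWord → F) (w : SignedWord) : prolong F v w ∅ = v w := by
  simp [prolong, delete_empty]

lemma prolong_insert (v : SignedWord → F) (w : SignedWord) {a : ℕ} {S : Finset ℕ}
    (ha : a ∉ S) :
    prolong F v w (insert a S) = prolong F v w S - prolong F v (w.delete {a}) S := by
  unfold prolong
  rw [Finset.sum_powerset_insert ha, sub_eq_add_neg, ← Finset.sum_neg_distrib]
  refine congrArg _ (Finset.sum_congr rfl fun T hT => ?_)
  have haT : a ∉ T := fun h => ha (Finset.mem_powerset.mp hT h)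
  rw [Finset.card_insert_of_notMem haT, delete_insert, pow_succ]
  ring

lemma prolong_pair (v : SignedWord → F) (w : SignedWord) {a b : ℕ} (hab : a ≠ b) :
    prolong F v w {a, b} =
      v w - v (w.delete {a}) - v (w.delete {b}) + v (w.delete {a, b}) := by
  have hb : a ∉ ({b} : Finset ℕ) := Finset.notMem_singleton.mpr hab
  rw [prolong_insert v w hb, delete_insert,
    ← insert_empty_eq, prolong_insert v w (Finset.notMem_empty b),
    prolong_insert v _ (Finset.notMem_empty b)]
  simp only [prolong_empty, insert_empty_eq]
  ring

lemma finiteTypeLe_iff (n : ℕ) (v : SignedWord → F) :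
    FiniteTypeLe F n v ↔ WordInvariant F v ∧
      ∀ (w : SignedWord) (S : Finset ℕ), S ⊆ w.letters → S.card = n + 1 →
        prolong F v w S = 0 := by
  refine and_congr_right fun _ => ⟨fun h w S hS hc => h w S hS (by omega), fun h => ?_⟩
  suffices ∀ k, n + 1 ≤ k → ∀ (w : SignedWord) (S : Finset ℕ), S ⊆ w.letters →
      S.card = k → prolong F v w S = 0 from
    fun w S hS hc => this S.card hc w S hS rfl
  intro k hk
  induction k, hk using Nat.le_induction with
  | base => exact h
  | succ k _ ih =>
    intro w S hS hc
    obtain ⟨a, haS⟩ : S.Nonempty := Finset.card_pos.mp (by omega)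
    have hcard : (S.erase a).card = k := by rw [Finset.card_erase_of_mem haS, hc]; rfl
    have hsub : S.erase a ⊆ (w.delete {a}).letters := by
      rw [letters_delete]
      exact Finset.subset_sdiff.mpr ⟨(Finset.erase_subset a S).trans hS,
        Finset.disjoint_singleton_right.mpr (Finset.notMem_erase a S)⟩
    rw [← Finset.insert_erase haS, prolong_insert v w (Finset.notMem_erase a S),
      ih w _ ((Finset.erase_subset a S).trans hS) hcard, ih _ _ hsub hcard, sub_zero]

lemma numLetters_delete_cast (w : SignedWord) {T : Finset ℕ} (hT : T ⊆ w.letters) :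
    ((w.delete T).numLetters : F) = w.numLetters - T.card := by
  rw [← numLetters_delete_add_card w hT, Nat.cast_add, add_sub_cancel_right]

lemma const_mem_Vn (n : ℕ) (c : F) : (fun _ => c) ∈ Vn F n := by
  refine ⟨fun _ _ _ => rfl, fun w S _ hS => ?_⟩
  have hsum : ∑ T ∈ S.powerset, (-1 : F) ^ T.card = 0 := by
    have h := congrArg (Int.cast (R := F)) (Finset.sum_powerset_neg_one_pow_card_of_nonempty
      (Finset.card_pos.mp (Nat.zero_lt_of_lt hS)))
    push_cast at h
    exact h
  rw [prolong, ← Finset.sum_mul, hsum, zero_mul]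

lemma numLetters_mem_Vn_one : (fun w : SignedWord => (w.numLetters : F)) ∈ Vn F 1 := by
  refine (finiteTypeLe_iff 1 _).mpr
    ⟨fun _ _ h => congrArg Nat.cast h.numLetters_eq, fun w S hS hcard => ?_⟩
  obtain ⟨a, b, hab, rfl⟩ := Finset.card_eq_two.mp hcard
  have ha : {a} ⊆ w.letters := Finset.singleton_subset_iff.mpr (hS (by simp))
  have hb : {b} ⊆ w.letters := Finset.singleton_subset_iff.mpr (hS (by simp))
  simp only [prolong_pair _ _ hab, numLetters_delete_cast w ha, numLetters_delete_cast w hb,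
    numLetters_delete_cast w hS, hcard, Finset.card_singleton]
  push_cast
  ring

lemma FiniteTypeLe.eq_of_pair {v : SignedWord → F} (hv : FiniteTypeLe F 1 v) {w : SignedWord}
    {a b : ℕ} (ha : a ∈ w.letters) (hb : b ∈ w.letters) (hab : a ≠ b) :
    v w = v (w.delete {a}) + v (w.delete {b}) - v (w.delete {a, b}) := by
  have hS : {a, b} ⊆ w.letters := Finset.insert_subset ha (Finset.singleton_subset_iff.mpr hb)
  have h := hv.2 w {a, b} hS (by rw [Finset.card_pair hab]; omega)
  rw [prolong_pair v w hab] at h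
  linear_combination h

lemma FiniteTypeLe.eq_add_numLetters_mul {v : SignedWord → F} (hv : FiniteTypeLe F 1 v)
    (w : SignedWord) :
    v w = v wordEmpty + w.numLetters * (v wordAA - v wordEmpty) := by
  induction hn : w.numLetters using Nat.strong_induction_on generalizing w with
  | _ n ih =>
    match n, hn with
    | 0, hn => simp [eq_wordEmpty_of_numLetters_eq_zero hn]
    | 1, hn =>
      rw [hv.1 w wordAA (cyclicEquiv_wordAA_of_numLetters_eq_one hn)]
      ring
    | m + 2, hn =>
      obtain ⟨a, ha, b, hb, hab⟩ :=
        (Finset.one_lt_card (s := w.letters)).mp (by change 1 < w.numLetters; omega)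
      have hS : {a, b} ⊆ w.letters := Finset.insert_subset ha (Finset.singleton_subset_iff.mpr hb)
      have hdel : ∀ {T : Finset ℕ}, T ⊆ w.letters → T.Nonempty →
          v (w.delete T) = v wordEmpty + (w.numLetters - T.card) * (v wordAA - v wordEmpty) :=
        fun hT hne => by
          have := numLetters_delete_add_card w hT
          have := hne.card_pos
          rw [ih _ (by omega) _ rfl, numLetters_delete_cast w hT]
      rw [hv.eq_of_pair ha hb hab, hdel (Finset.singleton_subset_iff.mpr ha) ⟨a, by simp⟩,
        hdel (Finset.singleton_subset_iff.mpr hb) ⟨b, by simp⟩, hdel hS ⟨a, by simp⟩,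
        Finset.card_pair hab, Finset.card_singleton, Finset.card_singleton, hn]
      push_cast
      ring

variable (F) in
def oneV1 : Vn F 1 := ⟨fun _ => 1, const_mem_Vn 1 1⟩

variable (F) in
def numLettersV1 : Vn F 1 := ⟨fun w => (w.numLetters : F), numLetters_mem_Vn_one⟩

lemma linearIndependent_oneV1_numLettersV1 :
    LinearIndependent F ![oneV1 F, numLettersV1 F] := by
  refine LinearIndependent.pair_iff.mpr fun s t hst => ?_
  have hφ := congrFun (congrArg Subtype.val hst) wordEmpty
  have hAA := congrFun (congrArg Subtype.val hst) wordAA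
  simp [oneV1, numLettersV1, numLetters_wordEmpty, numLetters_wordAA] at hφ hAA
  exact ⟨hφ, by rwa [hφ, zero_add] at hAA⟩

lemma top_le_span_oneV1_numLettersV1 :
    ⊤ ≤ Submodule.span F (Set.range ![oneV1 F, numLettersV1 F]) := by
  rintro v -
  have hv : v = v.1 wordEmpty • oneV1 F + (v.1 wordAA - v.1 wordEmpty) • numLettersV1 F :=
    Subtype.ext (funext fun w => by
      simp only [oneV1, numLettersV1, Submodule.coe_add, Submodule.coe_smul, Pi.add_apply,
        Pi.smul_apply, smul_eq_mul, FiniteTypeLe.eq_add_numLetters_mul v.2 w]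
      ring)
  rw [hv]
  exact Submodule.add_mem _ (Submodule.smul_mem _ _ (Submodule.subset_span ⟨0, rfl⟩))
    (Submodule.smul_mem _ _ (Submodule.subset_span ⟨1, rfl⟩))

end

theorem V1_dim_eq_two_general (F : Type*) [Field F] :
    Module.finrank F (Vn F 1) = 2 ∧
    ∃ b : Module.Basis (Fin 2) F (Vn F 1),
      ((b 0 : SignedWord → F) = fun _ => 1) ∧
      ((b 1 : SignedWord → F) = fun w => (w.numLetters : F)) := by
  let b := Module.Basis.mk (linearIndependent_oneV1_numLettersV1 (F := F))
    top_le_span_oneV1_numLettersV1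
  exact ⟨by rw [Module.finrank_eq_card_basis b, Fintype.card_fin], b,
    by simp [b, oneV1], by simp [b, numLettersV1]⟩

/-- `dim V₁ = 2`, with basis the constant function `1` and the
number-of-letters function. -/
theorem V1_dim_eq_two (F : Type*) [Field F] [CharZero F] :
    Module.finrank F (Vn F 1) = 2 ∧
    ∃ b : Module.Basis (Fin 2) F (Vn F 1),
      ((b 0 : SignedWord → F) = fun _ => 1) ∧
      ((b 1 : SignedWord → F) = fun w => (w.numLetters : F)) :=
  V1_dim_eq_two_general F
end

section
/- Let u be a signed word with k letters and let N_u be the subword-counting function assigning to a signed word w the number of k-element subsets of the letters of w whose induced signed subword is cyclically equivalent to an isomorphic copy of u. Then for every signed word w and every subset S of its letters, the prolongation of N_u satisfies Ñ_u(w,S) = Σ_{T ⊆ S} (−1)^{|T|} N_u(w∖T) = the number of k-element subsets U of the letters of w with S ⊆ U whose induced signed subword is cyclically equivalent to an isomorphic copy of u; in particular Ñ_u(w,S) = 0 whenever |S| > k. -/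
/-!
An occurrence `U` of `u` in `w` survives the deletion of `T` exactly when `U` and `T` are
disjoint, so the alternating sum over `T ⊆ S` counts `U` with weight
`∑_{T ⊆ S ∖ U} (-1)^|T|`, which is `1` if `S ⊆ U` and `0` otherwise.
-/

open Finset

section InclusionExclusion

variable {α R : Type*} [DecidableEq α] [CommRing R]

theorem sum_powerset_disjoint_neg_one_pow_card (S U : Finset α) :
    ∑ T ∈ S.powerset with Disjoint U T, (-1 : R) ^ #T = if S ⊆ U then 1 else 0 := by
  have hfilter : {T ∈ S.powerset | Disjoint U T} = (S \ U).powerset := by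
    ext T
    simp only [mem_filter, mem_powerset, subset_sdiff, disjoint_comm]
  have hℤ := congrArg (Int.cast : ℤ → R) (sum_powerset_neg_one_pow_card (x := S \ U))
  push_cast at hℤ
  simp only [hfilter, hℤ, sdiff_eq_empty_iff_subset]

theorem sum_powerset_neg_one_pow_mul_card_filter_disjoint (A : Finset (Finset α)) (S : Finset α) :
    ∑ T ∈ S.powerset, (-1 : R) ^ #T * #{U ∈ A | Disjoint U T} = #{U ∈ A | S ⊆ U} := by
  simp only [natCast_card_filter, mul_sum, mul_ite, mul_one, mul_zero]
  rw [sum_comm]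
  refine sum_congr rfl fun U _ => ?_
  rw [← sum_filter, sum_powerset_disjoint_neg_one_pow_card]

end InclusionExclusion

namespace SignedWord

theorem letters_delete (w : SignedWord) (T : Finset ℕ) :
    (w.delete T).letters = w.letters \ T := by
  ext a
  simp [letters, lettersL, delete, and_comm]

theorem restrict_delete_of_disjoint (w : SignedWord) {U T : Finset ℕ} (h : Disjoint U T) :
    (w.delete T).restrict U = w.restrict U := by
  apply Subtype.ext
  change (w.1.filter _).filter _ = w.1.filter _
  rw [List.filter_filter]
  refine List.filter_congr fun p _ => ?_
  by_cases hp : p.1 ∈ U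
  · simp [hp, disjoint_left.mp h hp]
  · simp [hp]

noncomputable def occurrences (u w : SignedWord) : Finset (Finset ℕ) := by
  classical
  exact {U ∈ w.letters.powerset | U.card = u.numLetters ∧ (w.restrict U).CyclicEquiv u}

theorem mem_occurrences {u w : SignedWord} {U : Finset ℕ} :
    U ∈ occurrences u w ↔
      U ⊆ w.letters ∧ U.card = u.numLetters ∧ (w.restrict U).CyclicEquiv u := by
  simp [occurrences]

theorem occurrences_delete (u w : SignedWord) (T : Finset ℕ) :
    occurrences u (w.delete T) = {U ∈ occurrences u w | Disjoint U T} := by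
  ext U
  simp only [mem_filter, mem_occurrences, letters_delete, subset_sdiff]
  constructor
  · rintro ⟨⟨hU, hUT⟩, hcard, hcyc⟩
    exact ⟨⟨hU, hcard, by rwa [restrict_delete_of_disjoint w hUT] at hcyc⟩, hUT⟩
  · rintro ⟨⟨hU, hcard, hcyc⟩, hUT⟩
    exact ⟨⟨hU, hUT⟩, hcard, by rwa [restrict_delete_of_disjoint w hUT]⟩

end SignedWord

open SignedWord

theorem Ncount_eq_card_occurrences (u w : SignedWord) : Ncount u w = #(occurrences u w) := rfl

theorem prolong_Ncount_general (F : Type*) [Field F] (u w : SignedWord)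
    (S : Finset ℕ) :
    (prolong F (fun w' => (Ncount u w' : F)) w S =
      ∑ T ∈ S.powerset, (-1 : F) ^ T.card * (Ncount u (w.delete T) : F)) ∧
    (prolong F (fun w' => (Ncount u w' : F)) w S =
      (Nat.card {U : Finset ℕ // U ⊆ w.letters ∧ S ⊆ U ∧ U.card = u.numLetters ∧
        (w.restrict U).CyclicEquiv u} : F)) ∧
    (u.numLetters < S.card → prolong F (fun w' => (Ncount u w' : F)) w S = 0) := by
  have hcount :
      prolong F (fun w' => (Ncount u w' : F)) w S = #{U ∈ occurrences u w | S ⊆ U} := by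
    simp only [prolong, Ncount_eq_card_occurrences, occurrences_delete]
    exact sum_powerset_neg_one_pow_mul_card_filter_disjoint _ _
  refine ⟨rfl, ?_, fun hlt => ?_⟩
  · rw [hcount, Nat.subtype_card _ fun U => ?_]
    rw [mem_filter, mem_occurrences]
    tauto
  · have hempty : {U ∈ occurrences u w | S ⊆ U} = ∅ :=
      filter_eq_empty_iff.mpr fun U hU hSU =>
        (card_le_card hSU).not_gt ((mem_occurrences.mp hU).2.1 ▸ hlt)
    rw [hcount, hempty, card_empty, Nat.cast_zero]

/-- the prolongation of `N_u` satisfies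
`Ñ_u(w,S) = Σ_{T ⊆ S} (−1)^{|T|} N_u(w∖T)` and equals the number of
`k`-element subsets `U` of the letters of `w` with `S ⊆ U` whose induced signed
subword is cyclically equivalent to (a copy of) `u`; in particular it vanishes
when `|S| > k`. -/
theorem prolong_Ncount (F : Type*) [Field F] [CharZero F] (u w : SignedWord)
    (S : Finset ℕ) (hS : S ⊆ w.letters) :
    (prolong F (fun w' => (Ncount u w' : F)) w S =
      ∑ T ∈ S.powerset, (-1 : F) ^ T.card * (Ncount u (w.delete T) : F)) ∧
    (prolong F (fun w' => (Ncount u w' : F)) w S =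
      (Nat.card {U : Finset ℕ // U ⊆ w.letters ∧ S ⊆ U ∧ U.card = u.numLetters ∧
        (w.restrict U).CyclicEquiv u} : F)) ∧
    (u.numLetters < S.card → prolong F (fun w' => (Ncount u w' : F)) w S = 0) :=
  prolong_Ncount_general F u w S
end
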